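/- Fix β > 1, ω > 1, n ∈ ℕ, and r > 0. Set α = (2n+1)π/(βω) and k = ⌈(r + π/(βω))/(2α)⌉, and let S be uniformly distributed on [0,1]. Then for every θ ∈ [−π, π] and every t ∈ [−r, r], 𝔼_S[Γ^cos_n(T_k(t + θ/(βω); α, β); S, ω)] = cos(βωt + θ). -/

import Mathlib

open Real
open scoped BigOperators

/-- The triangle function `T(t; α, β)`: equals `βt` on `[0, α]`, `2αβ - βt` on `(α, 2α]`,
and `0` otherwise. -/
noncomputable def tri (α β t : ℝ) : ℝ :=
  if 0 ≤ t ∧ t ≤ α then β * t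
  else if α < t ∧ t ≤ 2 * α then 2 * α * β - β * t
  else 0

/-- The triangle waveform `T_k(t; α, β) = Σ_{i=-k+1}^{k} T(t - 2α(i-1); α, β)`. -/
noncomputable def triWave (k : ℕ) (α β t : ℝ) : ℝ :=
  ∑ i ∈ Finset.Icc (-(k : ℤ) + 1) (k : ℤ), tri α β (t - 2 * α * ((i : ℝ) - 1))

/-- `ReLU(t) = max(0, t)`. -/
noncomputable def relu (t : ℝ) : ℝ := max 0 t

/-- `R₄(t; S, ω) = ReLU(t) + ReLU(t - π/ω) - ReLU(t - πS/ω) - ReLU(t - π(1-S)/ω)`. -/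
noncomputable def R4 (ω S t : ℝ) : ℝ :=
  relu t + relu (t - π / ω) - relu (t - π * S / ω) - relu (t - π * (1 - S) / ω)

/-- `Γ^sin(t; S, ω) = (πω/2) sin(πS) [R₄(t; S, ω) - R₄(t - π/ω; S, ω)]`. -/
noncomputable def gammaSin (ω S t : ℝ) : ℝ :=
  π * ω / 2 * Real.sin (π * S) * (R4 ω S t - R4 ω S (t - π / ω))

/-- `Γ^cos_n(t; S, ω) = Σ_{i=-n-1}^{n} Γ^sin(t - 2πi/ω + π/(2ω); S, ω)`. -/
noncomputable def gammaCos (n : ℕ) (ω S t : ℝ) : ℝ :=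
  ∑ i ∈ Finset.Icc (-(n : ℤ) - 1) (n : ℤ),
    gammaSin ω S (t - 2 * π * (i : ℝ) / ω + π / (2 * ω))

/-!
For `0 ≤ y ≤ π/ω`, averaging `R₄(y; S, ω)` against the weight `(πω/2) sin(πS)` gives `sin(ωy)`:
the two ReLUs with a random kink contribute equally by the symmetry `S ↦ 1 - S`, and an explicit
antiderivative does the rest. Hence `𝔼 Γ^sin(y)` is a single period of `sin(ωy)` supported on
`[0, 2π/ω]`, and `𝔼 Γ^cos_n(y)` is a sum of its translates by multiples of `2π/ω`; on
`[0, (2n+1)π/ω]` exactly one translate is active, so the sum is `sin(ωy + π/2) = cos(ωy)`.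

On `[-2αk, 2αk]` the waveform `T_k` agrees with the `2α`-periodic extension of `T`, whose values
lie in `[0, αβ] = [0, (2n+1)π/ω]`. Since `ωαβ` is an odd multiple of `π`, `cos(ω T(s)) = cos(ωβs)`
on `[0, 2α]`, and `cos(ωβ ·)` is `2α`-periodic, which undoes the reduction modulo `2α`.
-/

open Set

section Periodization

variable {α : Type*} [AddCommGroup α] [LinearOrder α] [IsOrderedAddMonoid α] {p : α}

theorem mem_Icc_of_sub_zsmul_mem_Ioo (hp : 0 < p) {x : α} {a b i : ℤ} (ha : a • p ≤ x)
    (hb : x ≤ (b + 1) • p) (hi : x - i • p ∈ Ioo 0 p) : i ∈ Finset.Icc a b := by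
  rw [mem_Ioo, sub_pos, sub_lt_iff_lt_add] at hi
  have hai : a < i + 1 := (zsmul_lt_zsmul_iff_left hp).mp <| ha.trans_lt <| by
    rw [add_zsmul, one_zsmul, add_comm]
    exact hi.2
  have hib : i < b + 1 := (zsmul_lt_zsmul_iff_left hp).mp (hi.1.trans_le hb)
  rw [Finset.mem_Icc]
  omega

variable [Archimedean α]

theorem Function.Periodic.apply_toIcoMod {β : Type*} {f : α → β} (h : Function.Periodic f p)
    (hp : 0 < p) (a x : α) : f (toIcoMod hp a x) = f x :=
  h.sub_zsmul_eq _

/-- Only the translate landing in `Ico 0 p` can contribute, and if its index is missing from `I`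
it lands on `0`, where `f` vanishes. -/
theorem sum_sub_zsmul_eq_toIcoMod {M : Type*} [AddCommMonoid M] (hp : 0 < p) {f : α → M}
    (hf : ∀ s ∉ Ioo 0 p, f s = 0) {I : Finset ℤ} {x : α}
    (hI : ∀ i : ℤ, x - i • p ∈ Ioo 0 p → i ∈ I) :
    ∑ i ∈ I, f (x - i • p) = f (toIcoMod hp 0 x) := by
  have hterm (i : ℤ) :
      f (x - i • p) = if toIcoDiv hp 0 x = i then f (toIcoMod hp 0 x) else 0 := by
    split_ifs with h
    · rw [← h, self_sub_toIcoDiv_zsmul]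
    · refine hf _ fun hmem => h (toIcoDiv_eq_of_sub_zsmul_mem_Ico hp ?_)
      simpa using Ioo_subset_Ico_self hmem
  rw [Finset.sum_congr rfl fun i _ => hterm i, Finset.sum_ite_eq]
  split_ifs with hj
  · rfl
  · exact (hf _ fun hmem => hj (hI _ hmem)).symm

end Periodization

section Triangle

variable {α β t : ℝ}

theorem tri_eq_zero_of_notMem_Ioo (ht : t ∉ Ioo 0 (2 * α)) : tri α β t = 0 := by
  rw [mem_Ioo, not_and_or, not_lt, not_lt] at ht
  unfold tri
  split_ifs with h₁ h₂
  · obtain rfl : t = 0 := by rcases ht with ht | ht <;> linarith [h₁.1, h₁.2]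
    ring
  · obtain rfl : t = 2 * α := by rcases ht with ht | ht <;> linarith [h₂.1, h₂.2]
    ring
  · rfl

theorem tri_mem_Icc (hα : 0 ≤ α) (hβ : 0 ≤ β) : tri α β t ∈ Icc 0 (α * β) := by
  unfold tri
  split_ifs with h₁ h₂
  · exact ⟨mul_nonneg hβ h₁.1, by nlinarith [h₁.2]⟩
  · exact ⟨by nlinarith [h₂.2], by nlinarith [h₂.1]⟩
  · exact ⟨le_rfl, mul_nonneg hα hβ⟩

theorem cos_mul_tri {c : ℝ} (m : ℤ) (hm : c * (α * β) = m * π) (ht : t ∈ Icc 0 (2 * α)) :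
    cos (c * tri α β t) = cos (c * β * t) := by
  unfold tri
  split_ifs with h₁ h₂
  · ring_nf
  · rw [← cos_int_mul_two_pi_sub _ m]
    congr 1
    linear_combination -2 * hm
  · rcases le_or_gt t α with h | h
    exacts [absurd ⟨ht.1, h⟩ h₁, absurd ⟨h, ht.2⟩ h₂]

theorem triWave_eq_tri_toIcoMod {k : ℕ} (h2α : 0 < 2 * α) {x : ℝ} (hx : |x| ≤ 2 * α * k) :
    triWave k α β x = tri α β (toIcoMod h2α 0 x) := by
  have harg (i : ℤ) : x - 2 * α * ((i : ℝ) - 1) = (x + 2 * α) - i • (2 * α) := by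
    rw [zsmul_eq_mul]; ring
  rw [triWave, Finset.sum_congr rfl fun i _ => congrArg (tri α β) (harg i),
    sum_sub_zsmul_eq_toIcoMod h2α (fun s hs => tri_eq_zero_of_notMem_Ioo hs),
    toIcoMod_add_right]
  obtain ⟨hx₁, hx₂⟩ := abs_le.mp hx
  refine fun i => mem_Icc_of_sub_zsmul_mem_Ioo h2α ?_ ?_
  · rw [zsmul_eq_mul]; push_cast; linarith
  · rw [zsmul_eq_mul]; push_cast; linarith

end Triangle


theorem relu_of_nonpos {t : ℝ} (h : t ≤ 0) : relu t = 0 := max_eq_left h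

theorem relu_of_nonneg {t : ℝ} (h : 0 ≤ t) : relu t = t := max_eq_right h

@[fun_prop]
theorem continuous_relu : Continuous relu := continuous_const.max continuous_id

theorem integral_sin_pi_mul_mul_sub (y c a b : ℝ) :
    ∫ S in a..b, sin (π * S) * (y - c * S) =
      (-(y - c * b) * cos (π * b) / π - c * sin (π * b) / π ^ 2) -
        (-(y - c * a) * cos (π * a) / π - c * sin (π * a) / π ^ 2) := by
  refine intervalIntegral.integral_eq_sub_of_hasDerivAt
    (f := fun S => -(y - c * S) * cos (π * S) / π - c * sin (π * S) / π ^ 2) (fun S _ => ?_)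
    ((by fun_prop : Continuous fun S => sin (π * S) * (y - c * S)).intervalIntegrable a b)
  have hπS : HasDerivAt (fun S => π * S) π S := by simpa using (hasDerivAt_id S).const_mul π
  have hlin : HasDerivAt (fun S => -(y - c * S)) c S :=
    (((hasDerivAt_id S).const_mul c).const_sub y).neg.congr_deriv (by simp)
  refine ((hlin.mul ((hasDerivAt_cos _).comp S hπS)).div_const π |>.sub
    ((((hasDerivAt_sin _).comp S hπS).const_mul c).div_const (π ^ 2))).congr_deriv ?_
  simp only [Function.comp_apply]
  field_simp
  ring

theorem integral_sin_pi_mul_relu {y c : ℝ} (hc : 0 < c) (hy : y ∈ Icc 0 c) :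
    ∫ S in (0 : ℝ)..1, sin (π * S) * relu (y - c * S) =
      y / π - c * sin (π * (y / c)) / π ^ 2 := by
  have hu : y / c ∈ Icc 0 1 := ⟨div_nonneg hy.1 hc.le, (div_le_one hc).mpr hy.2⟩
  have hint : Continuous fun S => sin (π * S) * relu (y - c * S) := by fun_prop
  rw [← intervalIntegral.integral_add_adjacent_intervals (hint.intervalIntegrable 0 (y / c))
    (hint.intervalIntegrable (y / c) 1)]
  have hleft : ∫ S in (0 : ℝ)..y / c, sin (π * S) * relu (y - c * S) =
      ∫ S in (0 : ℝ)..y / c, sin (π * S) * (y - c * S) := by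
    refine intervalIntegral.integral_congr fun S hS => ?_
    rw [uIcc_of_le hu.1] at hS
    rw [relu_of_nonneg]
    have := (le_div_iff₀' hc).mp hS.2
    linarith
  have hright : ∫ S in y / c..1, sin (π * S) * relu (y - c * S) = 0 := by
    rw [← intervalIntegral.integral_zero]
    refine intervalIntegral.integral_congr fun S hS => ?_
    rw [uIcc_of_le hu.2] at hS
    rw [relu_of_nonpos, mul_zero]
    have := (div_le_iff₀' hc).mp hS.1
    linarith
  rw [hleft, hright, integral_sin_pi_mul_mul_sub, mul_div_cancel₀ _ hc.ne']
  simp only [sub_self, neg_zero, zero_mul, zero_div, zero_sub, mul_zero, sub_zero, cos_zero,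
    mul_one, sin_zero, add_zero]
  ring

section R4

variable {ω S t : ℝ}

theorem R4_eq_zero_of_nonpos (hω : 0 < ω) (hS : S ∈ Icc 0 1) (ht : t ≤ 0) : R4 ω S t = 0 := by
  have h₁ : 0 ≤ π * S / ω := by have := hS.1; positivity
  have h₂ : 0 ≤ π * (1 - S) / ω := div_nonneg (mul_nonneg pi_pos.le (by linarith [hS.2])) hω.le
  have h₃ : 0 ≤ π / ω := by positivity
  rw [R4, relu_of_nonpos ht, relu_of_nonpos (by linarith), relu_of_nonpos (by linarith),
    relu_of_nonpos (by linarith)]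
  ring

theorem R4_eq_zero_of_le (hω : 0 < ω) (hS : S ∈ Icc 0 1) (ht : π / ω ≤ t) : R4 ω S t = 0 := by
  have hsplit : π * S / ω + π * (1 - S) / ω = π / ω := by field_simp; ring
  have h₁ : 0 ≤ π * S / ω := by have := hS.1; positivity
  have h₂ : 0 ≤ π * (1 - S) / ω := div_nonneg (mul_nonneg pi_pos.le (by linarith [hS.2])) hω.le
  rw [R4, relu_of_nonneg (by linarith), relu_of_nonneg (by linarith),
    relu_of_nonneg (by linarith), relu_of_nonneg (by linarith)]
  linarith

theorem R4_eq_of_mem_Icc (ht : t ∈ Icc 0 (π / ω)) :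
    R4 ω S t = t - relu (t - π / ω * S) - relu (t - π / ω * (1 - S)) := by
  rw [R4, relu_of_nonneg ht.1, relu_of_nonpos (by linarith [ht.2])]
  ring_nf

theorem integral_sin_mul_R4 (hω : 0 < ω) (ht : t ∈ Icc 0 (π / ω)) :
    ∫ S in (0 : ℝ)..1, π * ω / 2 * sin (π * S) * R4 ω S t = sin (ω * t) := by
  have hc : 0 < π / ω := by positivity
  have hrelu : ∫ S in (0 : ℝ)..1, sin (π * S) * relu (t - π / ω * S) =
      t / π - sin (ω * t) / (ω * π) := by
    rw [integral_sin_pi_mul_relu hc ht]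
    field_simp
  have hrelu' : ∫ S in (0 : ℝ)..1, sin (π * S) * relu (t - π / ω * (1 - S)) =
      t / π - sin (ω * t) / (ω * π) := by
    have hsymm := intervalIntegral.integral_comp_sub_left
      (fun S => sin (π * S) * relu (t - π / ω * S)) (a := 0) (b := 1) 1
    simp only [sub_zero, sub_self, mul_sub π, mul_one, sin_pi_sub] at hsymm
    rw [← hrelu, ← hsymm]
  have hconst : ∫ S in (0 : ℝ)..1, sin (π * S) * t = 2 * t / π := by
    have := integral_sin_pi_mul_mul_sub t 0 0 1
    simp only [zero_mul, sub_zero, mul_one, mul_zero, cos_pi, sin_pi, cos_zero, sin_zero] at this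
    rw [this]
    ring
  have hcont : Continuous fun S => sin (π * S) * relu (t - π / ω * S) := by fun_prop
  have hcont' : Continuous fun S => sin (π * S) * relu (t - π / ω * (1 - S)) := by fun_prop
  have hcont₀ : Continuous fun S => sin (π * S) * t := by fun_prop
  calc ∫ S in (0 : ℝ)..1, π * ω / 2 * sin (π * S) * R4 ω S t
      = ∫ S in (0 : ℝ)..1, π * ω / 2 * (sin (π * S) * t - sin (π * S) * relu (t - π / ω * S) -
          sin (π * S) * relu (t - π / ω * (1 - S))) := by
        refine intervalIntegral.integral_congr fun S _ => ?_
        simp only [R4_eq_of_mem_Icc ht]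
        ring
    _ = sin (ω * t) := by
        rw [intervalIntegral.integral_const_mul, intervalIntegral.integral_sub
          ((hcont₀.intervalIntegrable 0 1).sub (hcont.intervalIntegrable 0 1))
          (hcont'.intervalIntegrable 0 1), intervalIntegral.integral_sub
          (hcont₀.intervalIntegrable 0 1) (hcont.intervalIntegrable 0 1), hconst, hrelu, hrelu']
        field_simp
        ring

end R4

section Gamma

variable {ω S t : ℝ}

theorem continuous_gammaSin (ω t : ℝ) : Continuous fun S => gammaSin ω S t := by
  unfold gammaSin R4
  fun_prop

theorem gammaSin_eq_zero_of_notMem_Ioo (hω : 0 < ω) (hS : S ∈ Icc 0 1)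
    (ht : t ∉ Ioo 0 (2 * π / ω)) : gammaSin ω S t = 0 := by
  rw [mem_Ioo, not_and_or, not_lt, not_lt] at ht
  have hc : 0 < π / ω := by positivity
  have h2 : 2 * π / ω = π / ω + π / ω := by ring
  rcases ht with ht | ht
  · rw [gammaSin, R4_eq_zero_of_nonpos hω hS ht, R4_eq_zero_of_nonpos hω hS (by linarith)]
    ring
  · rw [gammaSin, R4_eq_zero_of_le hω hS (by linarith), R4_eq_zero_of_le hω hS (by linarith)]
    ring

theorem integral_gammaSin (hω : 0 < ω) (ht : t ∈ Icc 0 (2 * π / ω)) :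
    ∫ S in (0 : ℝ)..1, gammaSin ω S t = sin (ω * t) := by
  rcases le_total t (π / ω) with h | h
  · have hfirst : ∀ S ∈ uIcc (0 : ℝ) 1,
        gammaSin ω S t = π * ω / 2 * sin (π * S) * R4 ω S t := by
      intro S hS
      rw [uIcc_of_le zero_le_one] at hS
      rw [gammaSin, R4_eq_zero_of_nonpos (t := t - π / ω) hω hS (by linarith), sub_zero]
    rw [intervalIntegral.integral_congr hfirst, integral_sin_mul_R4 hω ⟨ht.1, h⟩]
  · have hsecond : ∀ S ∈ uIcc (0 : ℝ) 1,
        gammaSin ω S t = -(π * ω / 2 * sin (π * S) * R4 ω S (t - π / ω)) := by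
      intro S hS
      rw [uIcc_of_le zero_le_one] at hS
      rw [gammaSin, R4_eq_zero_of_le hω hS h, zero_sub, mul_neg]
    have hshift : t - π / ω ∈ Icc 0 (π / ω) := by
      constructor <;> linarith [ht.2, show 2 * π / ω = π / ω + π / ω by ring]
    rw [intervalIntegral.integral_congr hsecond, intervalIntegral.integral_neg,
      integral_sin_mul_R4 hω hshift, mul_sub, mul_div_cancel₀ _ hω.ne', sin_sub_pi, neg_neg]

theorem integral_gammaCos (hω : 0 < ω) (n : ℕ) {y : ℝ}
    (hy : y ∈ Icc 0 ((2 * n + 1) * π / ω)) :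
    ∫ S in (0 : ℝ)..1, gammaCos n ω S y = cos (ω * y) := by
  have hP : 0 < 2 * π / ω := by positivity
  have harg (i : ℤ) :
      y - 2 * π * (i : ℝ) / ω + π / (2 * ω) = (y + π / (2 * ω)) - i • (2 * π / ω) := by
    rw [zsmul_eq_mul]; ring
  have hsupp (s : ℝ) (hs : s ∉ Ioo 0 (2 * π / ω)) : ∫ S in (0 : ℝ)..1, gammaSin ω S s = 0 := by
    have hzero : ∀ S ∈ uIcc (0 : ℝ) 1, gammaSin ω S s = 0 := fun S hS =>
      gammaSin_eq_zero_of_notMem_Ioo hω (by rwa [uIcc_of_le zero_le_one] at hS) hs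
    rw [intervalIntegral.integral_congr hzero, intervalIntegral.integral_zero]
  have hper : Function.Periodic (fun s => sin (ω * s)) (2 * π / ω) := by
    simpa only [div_eq_inv_mul] using sin_periodic.const_mul ω
  unfold gammaCos
  rw [intervalIntegral.integral_finsetSum fun i _ =>
    (continuous_gammaSin ω _).intervalIntegrable 0 1]
  simp only [harg]
  rw [sum_sub_zsmul_eq_toIcoMod hP hsupp,
    integral_gammaSin hω (Ico_subset_Icc_self (toIcoMod_mem_Ico' hP _)), hper.apply_toIcoMod,
    mul_add, show ω * (π / (2 * ω)) = π / 2 by field_simp, sin_add_pi_div_two]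
  have hc : 0 ≤ π / ω := by positivity
  have hn : 0 ≤ (n : ℝ) * (π / ω) := mul_nonneg n.cast_nonneg hc
  have hy₂ : y ≤ (2 * n + 1) * (π / ω) := by rw [← mul_div_assoc]; exact hy.2
  refine fun i => mem_Icc_of_sub_zsmul_mem_Ioo hP ?_ ?_ <;>
    rw [zsmul_eq_mul, show π / (2 * ω) = π / ω / 2 by ring,
      show 2 * π / ω = 2 * (π / ω) by ring] <;>
    push_cast <;> nlinarith [hy.1]

end Gamma

theorem deep_cosine_general (β ω : ℝ) (hβ : 1 < β) (hω : 1 < ω) (n : ℕ) (r : ℝ)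
    (α : ℝ) (hα : α = (2 * (n : ℝ) + 1) * π / (β * ω))
    (k : ℕ) (hk : k = ⌈(r + π / (β * ω)) / (2 * α)⌉₊)
    (θ t : ℝ) (hθ : θ ∈ Set.Icc (-π) π) (ht : t ∈ Set.Icc (-r) r) :
    ∫ S in (0 : ℝ)..1, gammaCos n ω S (triWave k α β (t + θ / (β * ω))) =
      Real.cos (β * ω * t + θ) := by
  have hω₀ : 0 < ω := by linarith
  have hβ₀ : 0 < β := by linarith
  have h2α : 0 < 2 * α := by rw [hα]; positivity
  have hαβ : α * β = (2 * n + 1) * π / ω := by rw [hα]; field_simp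
  set x := t + θ / (β * ω) with hx
  have hx_le : |x| ≤ 2 * α * k := by
    have hθx : |θ / (β * ω)| ≤ π / (β * ω) := by
      rw [abs_div, abs_of_pos (mul_pos hβ₀ hω₀)]
      exact div_le_div_of_nonneg_right (abs_le.mpr hθ) (mul_pos hβ₀ hω₀).le
    calc |x| ≤ |t| + |θ / (β * ω)| := abs_add_le _ _
      _ ≤ r + π / (β * ω) := add_le_add (abs_le.mpr ht) hθx
      _ ≤ 2 * α * k := by
        rw [mul_comm (2 * α), ← div_le_iff₀ h2α, hk]
        exact Nat.le_ceil _
  have hper : Function.Periodic (fun s => cos (ω * β * s)) (2 * α) := by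
    have hperiod : ((2 * n + 1 : ℕ) : ℝ) * ((ω * β)⁻¹ * (2 * π)) = 2 * α := by
      rw [hα]
      push_cast
      field_simp
    simpa only [hperiod] using (cos_periodic.const_mul (ω * β)).nat_mul (2 * n + 1)
  have hs : toIcoMod h2α 0 x ∈ Icc 0 (2 * α) := Ico_subset_Icc_self (toIcoMod_mem_Ico' h2α x)
  rw [triWave_eq_tri_toIcoMod h2α hx_le,
    integral_gammaCos hω₀ n (hαβ ▸ tri_mem_Icc (by linarith) hβ₀.le),
    cos_mul_tri (2 * n + 1) (by rw [hαβ]; push_cast; field_simp) hs, hper.apply_toIcoMod h2α, hx]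
  congr 1
  field_simp

/-- **Frequency multiplication (deep cosine lemma).** Fix `β > 1`, `ω > 1`, `r > 0`, set
`α = (2n+1)π/(βω)` and `k = ⌈(r + π/(βω))/(2α)⌉`. Then for every `θ ∈ [-π, π]` and
`t ∈ [-r, r]`, with `S ~ Unif[0,1]`,
`𝔼_S[Γ^cos_n(T_k(t + θ/(βω); α, β); S, ω)] = cos(βωt + θ)`. -/
theorem deep_cosine (β ω : ℝ) (hβ : 1 < β) (hω : 1 < ω) (n : ℕ) (r : ℝ) (hr : 0 < r)
    (α : ℝ) (hα : α = (2 * (n : ℝ) + 1) * π / (β * ω))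
    (k : ℕ) (hk : k = ⌈(r + π / (β * ω)) / (2 * α)⌉₊)
    (θ t : ℝ) (hθ : θ ∈ Set.Icc (-π) π) (ht : t ∈ Set.Icc (-r) r) :
    ∫ S in (0 : ℝ)..1, gammaCos n ω S (triWave k α β (t + θ / (β * ω))) =
      Real.cos (β * ω * t + θ) :=
  deep_cosine_general β ω hβ hω n r α hα k hk θ t hθ ht
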